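/- Let d ≥ 2 be an integer, let D be a finite set with |D| ≥ 4·C(d,2), and let F be a function assigning to every d-element subset T of D a non-empty collection F(T) of 2-element subsets of T. If x1, ..., xd are sampled independently and uniformly at random from D, then the probability that x1, ..., xd are pairwise distinct and {x1, x2} ∈ F({x1, ..., xd}) is at least 1/(2·C(d,2)) = 1/(d(d−1)). -/

import Mathlib

/-!
Most tuples are injective: for `n = |D| ≥ 4·C(d,2)` their number `n(n-1)⋯(n-d+1)` is at least
`n^d - C(d,2)·n^(d-1) ≥ n^d / 2`. Fix a pair `P(T) ∈ F(T)` for every `d`-set `T`. An injective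
tuple `x` is recovered from the 2-set `Q` of positions where `x` takes values in `P(image x)`
together with `x ∘ σ_Q`, where the permutation `σ_Q` moves the first two positions onto `Q`; and
`x ∘ σ_Q` is an injective tuple whose first two entries form `P` of its image. So there are at
most `C(d,2)` times as many injective tuples as tuples counted by the theorem.
-/

open Finset Function

namespace Nat

theorem pow_succ_le_descFactorial_add_choose_two_mul_pow (n : ℕ) :
    ∀ k : ℕ, n ^ (k + 1) ≤ n.descFactorial (k + 1) + (k + 1).choose 2 * n ^ k
  | 0 => by simp
  | k + 1 => by
    have ih := pow_succ_le_descFactorial_add_choose_two_mul_pow n k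
    -- `n ≤ (n - (k + 1)) + (k + 1)` holds even when the subtraction truncates
    have hdesc : n.descFactorial (k + 1) * n ≤
        n.descFactorial (k + 2) + (k + 1) * n.descFactorial (k + 1) := by
      calc n.descFactorial (k + 1) * n
          ≤ n.descFactorial (k + 1) * (n - (k + 1) + (k + 1)) :=
            Nat.mul_le_mul_left _ (by omega)
        _ = n.descFactorial (k + 2) + (k + 1) * n.descFactorial (k + 1) := by
            rw [descFactorial_succ n (k + 1)]; ring
    have hpow : (k + 1) * n.descFactorial (k + 1) ≤ (k + 1) * n ^ (k + 1) :=
      Nat.mul_le_mul_left _ (descFactorial_le_pow n (k + 1))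
    have hchoose : (k + 2).choose 2 = (k + 1).choose 2 + (k + 1) := by
      rw [choose_succ_succ', choose_one_right, add_comm]
    calc n ^ (k + 2) = n ^ (k + 1) * n := pow_succ n (k + 1)
      _ ≤ (n.descFactorial (k + 1) + (k + 1).choose 2 * n ^ k) * n := Nat.mul_le_mul_right n ih
      _ = n.descFactorial (k + 1) * n + (k + 1).choose 2 * n ^ (k + 1) := by ring
      _ ≤ n.descFactorial (k + 2) + (k + 2).choose 2 * n ^ (k + 1) := by
        rw [hchoose]; nlinarith

theorem pow_le_two_mul_descFactorial {n k : ℕ} (h : 2 * k.choose 2 ≤ n) :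
    n ^ k ≤ 2 * n.descFactorial k := by
  rcases k with _ | k
  · simp
  · have hsmall : 2 * ((k + 1).choose 2 * n ^ k) ≤ n ^ (k + 1) := by
      rw [← mul_assoc, pow_succ']
      exact Nat.mul_le_mul_right _ h
    have := pow_succ_le_descFactorial_add_choose_two_mul_pow n k
    omega

end Nat

theorem Equiv.Perm.exists_apply_eq_and_apply_eq {α : Type*} [DecidableEq α] {a b i j : α}
    (hab : a ≠ b) (hij : i ≠ j) : ∃ σ : Equiv.Perm α, σ a = i ∧ σ b = j := by
  have ha : a ≠ Equiv.swap a i j := fun h =>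
    hij (by simpa [Equiv.swap_apply_self] using congrArg (Equiv.swap a i) h)
  refine ⟨Equiv.swap a i * Equiv.swap b (Equiv.swap a i j), ?_, ?_⟩
  · rw [Equiv.Perm.mul_apply, Equiv.swap_apply_of_ne_of_ne hab ha, Equiv.swap_apply_left]
  · rw [Equiv.Perm.mul_apply, Equiv.swap_apply_left, Equiv.swap_apply_self]

theorem card_filter_injective {α β : Type*} [Fintype α] [DecidableEq α] [Fintype β]
    [DecidableEq β] :
    #{x : α → β | Injective x} = (Fintype.card β).descFactorial (Fintype.card α) := by
  rw [← Fintype.card_subtype, Fintype.card_congr (Equiv.subtypeInjectiveEquivEmbedding α β),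
    Fintype.card_embedding_eq]

theorem card_filter_injective_le_choose_two_mul {α D : Type*} [Fintype α] [DecidableEq α]
    [Fintype D] [DecidableEq D] {a b : α} (hab : a ≠ b) (P : Finset D → Finset D)
    (hP : ∀ x : α → D, Injective x →
      P (univ.image x) ⊆ univ.image x ∧ (P (univ.image x)).card = 2) :
    #{x : α → D | Injective x} ≤
      (Fintype.card α).choose 2 *
        #{x : α → D | Injective x ∧ {x a, x b} = P (univ.image x)} := by
  have hperm : ∀ Q : Finset α, ∃ σ : Equiv.Perm α, Q.card = 2 → {σ a, σ b} = Q := by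
    intro Q
    by_cases hQ : Q.card = 2
    · obtain ⟨i, j, hij, rfl⟩ := card_eq_two.mp hQ
      obtain ⟨σ, hσa, hσb⟩ := Equiv.Perm.exists_apply_eq_and_apply_eq hab hij
      exact ⟨σ, fun _ => by rw [hσa, hσb]⟩
    · exact ⟨1, fun h => absurd h hQ⟩
  choose σ hσ using hperm
  let Q : (α → D) → Finset α := fun x => {i | x i ∈ P (univ.image x)}
  have himage_Q : ∀ x, Injective x → (Q x).image x = P (univ.image x) := fun x hx => by
    rw [← filter_image (p := (· ∈ P (univ.image x))), filter_mem_eq_inter,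
      inter_eq_right.mpr (hP x hx).1]
  have hcard_Q : ∀ x, Injective x → (Q x).card = 2 := fun x hx => by
    rw [← card_image_of_injective _ hx, himage_Q x hx, (hP x hx).2]
  let f : (α → D) → Finset α × (α → D) := fun x => (Q x, x ∘ σ (Q x))
  let E : Finset (α → D) := {x | Injective x}
  let G : Finset (α → D) := {x | Injective x ∧ {x a, x b} = P (univ.image x)}
  have hmaps : ∀ x ∈ E, f x ∈ powersetCard 2 univ ×ˢ G := by
    intro x hx
    replace hx : Injective x := (mem_filter.mp hx).2
    have himage : univ.image (x ∘ σ (Q x)) = univ.image x := by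
      rw [← image_image, image_univ_of_surjective (σ (Q x)).surjective]
    have hpair : ({x (σ (Q x) a), x (σ (Q x) b)} : Finset D) = P (univ.image x) :=
      calc ({x (σ (Q x) a), x (σ (Q x) b)} : Finset D)
          = ({σ (Q x) a, σ (Q x) b} : Finset α).image x := by rw [image_insert, image_singleton]
        _ = (Q x).image x := by rw [hσ (Q x) (hcard_Q x hx)]
        _ = P (univ.image x) := himage_Q x hx
    simp only [f, G, mem_product, mem_powersetCard, mem_filter, mem_univ, true_and, subset_univ]
    exact ⟨hcard_Q x hx, hx.comp (σ (Q x)).injective, by rw [himage]; exact hpair⟩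
  have hinj : Set.InjOn f E := by
    intro x _ x' _ hxx'
    have hQ : Q x = Q x' := congrArg Prod.fst hxx'
    have hcomp : x ∘ σ (Q x) = x' ∘ σ (Q x') := congrArg Prod.snd hxx'
    rw [← hQ] at hcomp
    exact (σ (Q x)).surjective.injective_comp_right hcomp
  have := card_le_card_of_injOn f hmaps hinj
  rwa [card_product, card_powersetCard, card_univ] at this

/-- Let `d ≥ 2`, let `D` be a finite set with `|D| ≥ 4·C(d,2)`, and let `F`
assign to every `d`-element subset `T` of `D` a non-empty collection of
`2`-element subsets of `T`.  For `x₁, …, x_d` sampled independently and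
uniformly from `D` (uniform product measure on `D^d`, expressed by counting),
the probability that `x₁, …, x_d` are pairwise distinct and
`{x₁, x₂} ∈ F({x₁, …, x_d})` is at least `1/(2·C(d,2)) = 1/(d(d-1))`. -/
theorem stmt_11 {D : Type*} [Fintype D] [DecidableEq D] (d : ℕ) (hd : 2 ≤ d)
    (hD : 4 * d.choose 2 ≤ Fintype.card D)
    (F : Finset D → Finset (Finset D))
    (hF : ∀ T : Finset D, T.card = d →
      (F T).Nonempty ∧ ∀ P ∈ F T, P ⊆ T ∧ P.card = 2) :
    (1 : ℝ) / (2 * d.choose 2) ≤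
      ((univ.filter fun x : Fin d → D => Function.Injective x ∧
          ({x ⟨0, by omega⟩, x ⟨1, by omega⟩} : Finset D) ∈
            F (Finset.image x univ)).card : ℝ) /
        ((Fintype.card D : ℝ) ^ d) := by
  have hpick : ∀ T : Finset D, ∃ p, T.card = d → p ∈ F T := fun T =>
    if hT : T.card = d then ⟨_, fun _ => (hF T hT).1.choose_spec⟩ else ⟨∅, (absurd · hT)⟩
  choose P hP using hpick
  have himage_card : ∀ x : Fin d → D, Injective x → (univ.image x).card = d := fun x hx => by
    rw [card_image_of_injective _ hx, card_univ, Fintype.card_fin]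
  have hcount := card_filter_injective_le_choose_two_mul
    (a := ⟨0, by omega⟩) (b := ⟨1, by omega⟩) (by simp [Fin.ext_iff]) P fun x hx =>
      (hF _ (himage_card x hx)).2 _ (hP _ (himage_card x hx))
  have hgood : #{x : Fin d → D | Injective x ∧
        {x ⟨0, by omega⟩, x ⟨1, by omega⟩} = P (univ.image x)} ≤
      #{x : Fin d → D | Injective x ∧
          {x ⟨0, by omega⟩, x ⟨1, by omega⟩} ∈ F (univ.image x)} :=
    card_le_card <| monotone_filter_right _ fun x _ ⟨hx, hpair⟩ =>
      ⟨hx, hpair ▸ hP _ (himage_card x hx)⟩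
  rw [Fintype.card_fin] at hcount
  have hpow : Fintype.card D ^ d ≤ 2 * #{x : Fin d → D | Injective x} := by
    rw [card_filter_injective, Fintype.card_fin]
    exact Nat.pow_le_two_mul_descFactorial (by omega)
  have hC : 0 < d.choose 2 := Nat.choose_pos hd
  have hN : 0 < Fintype.card D := by omega
  rw [div_le_div_iff₀ (by positivity) (by positivity), one_mul]
  have := Nat.mul_le_mul_left (d.choose 2) hgood
  exact_mod_cast hpow.trans (by linarith)
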